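/- arXiv:2507.09480 — 2 statements merged into one kernel-verified Lean document; each statement's English description precedes it below -/
import Mathlib

section
/- For distinct real numbers x_0, ..., x_N, the (i+1, j+1) entry of the inverse of the Vandermonde matrix W with entries W_{(r+1)(c+1)} = x_r^c is given by (-1)^{N-i} e_{N-i}({x_0,...,x_N} \ {x_j}) divided by the product over m ≠ j of (x_j - x_m), where e_m denotes the m-th elementary symmetric polynomial. -/
/-!
Column `j` of `W⁻¹` is the coefficient vector of the Lagrange basis polynomial
`∏_{m ≠ j} (X - x_m) / ∏_{m ≠ j} (x_j - x_m)`: multiplying by `W` evaluates it at the nodes,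
giving the `j`-th unit vector. Vieta's formulas then express its coefficients through the
elementary symmetric functions of the other nodes.
-/

open Finset

/-- The m-th elementary symmetric function of `f` over a finite set `s`. -/
def esymmOn {ι : Type*} [DecidableEq ι] (s : Finset ι) (f : ι → ℝ) (m : ℕ) : ℝ :=
  ∑ t ∈ s.powersetCard m, ∏ i ∈ t, f i

open Polynomial Lagrange Matrix

theorem coeff_nodal_eq_esymmOn {ι : Type*} [DecidableEq ι] (s : Finset ι) (v : ι → ℝ) {k : ℕ}
    (hk : k ≤ #s) :
    (nodal s v).coeff k = (-1) ^ (#s - k) * esymmOn s v (#s - k) := by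
  have hmap : nodal s v = ((s.val.map v).map fun t => X - C t).prod := by
    rw [Multiset.map_map]; rfl
  rw [hmap, Multiset.prod_X_sub_C_coeff _ (by simpa using hk), Multiset.card_map,
    Finset.esymm_map_val]
  rfl

theorem Matrix.vandermonde_mulVec_coeff {R : Type*} [CommRing R] {n : ℕ} (v : Fin n → R)
    {p : R[X]} (hp : p.natDegree < n) (r : Fin n) :
    (vandermonde v *ᵥ fun c => p.coeff c) r = p.eval (v r) := by
  rw [eval_eq_sum_range' hp, ← Fin.sum_univ_eq_sum_range (fun c => p.coeff c * v r ^ c)]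
  simp only [mulVec, dotProduct, vandermonde_apply, mul_comm]

theorem Matrix.inv_vandermonde_apply {F : Type*} [Field F] {n : ℕ} {v : Fin n → F}
    (hv : Function.Injective v) (c j : Fin n) :
    (vandermonde v)⁻¹ c j =
      (nodal (univ.erase j) v).coeff c / ∏ m ∈ univ.erase j, (v j - v m) := by
  set M : Matrix (Fin n) (Fin n) F :=
    of fun c j => (nodal (univ.erase j) v).coeff c / ∏ m ∈ univ.erase j, (v j - v m)
  suffices vandermonde v * M = 1 by rw [inv_eq_right_inv this]; rfl
  ext r k
  have hdeg : (nodal (univ.erase k) v).natDegree < n := by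
    rw [natDegree_nodal, card_erase_of_mem (mem_univ k), card_univ, Fintype.card_fin]
    exact Nat.sub_lt k.pos one_pos
  have hcol : (vandermonde v * M) r k =
      (nodal (univ.erase k) v).eval (v r) / ∏ m ∈ univ.erase k, (v k - v m) := by
    rw [← vandermonde_mulVec_coeff v hdeg, mulVec, dotProduct, sum_div, mul_apply]
    simp only [M, of_apply, mul_div_assoc]
  rw [hcol, eval_nodal]
  by_cases hrk : r = k
  · subst hrk
    refine (div_self (prod_ne_zero_iff.mpr fun m hm => ?_)).trans (one_apply_eq r).symm
    exact sub_ne_zero.mpr fun h => (mem_erase.mp hm).1 (hv h.symm)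
  · rw [one_apply_ne hrk, prod_eq_zero (mem_erase.mpr ⟨hrk, mem_univ r⟩) (sub_self _), zero_div]

theorem inverse_vandermonde_entry (N : ℕ) (x : Fin (N + 1) → ℝ)
    (hx : Function.Injective x) (i j : Fin (N + 1)) :
    (Matrix.vandermonde x)⁻¹ i j =
      (-1) ^ (N - (i : ℕ)) * esymmOn (Finset.univ.erase j) x (N - (i : ℕ)) /
        ∏ m ∈ Finset.univ.erase j, (x j - x m) := by
  have hcard : #(univ.erase j) = N := by simp
  rw [Matrix.inv_vandermonde_apply hx, coeff_nodal_eq_esymmOn _ _ (hcard.symm ▸ i.is_le), hcard]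
end

section
/- Let f be (N+1)-times continuously differentiable on an interval containing 0, with |f^{(N+1)}(ζ)| ≤ M for all |ζ| ≤ Kh. Sample N+1 points x_0,...,x_N with |x_i - x_j| ≥ h for i ≠ j and |x_i| ≤ Kh. Let a_n = f^{(n)}(0)/n!, and define estimates (a_0^e,...,a_N^e) = W^{-1}·(f(x_0),...,f(x_N)) where W is the Vandermonde matrix with rows (1, x_i, ..., x_i^N). Then |a_i^e - a_i| ≤ M·C(N,i)·K^{2N+1-i}·h^{N+1-i}/N! for each i = 0,...,N. -/
/-!
Let `W` be the Vandermonde matrix of the nodes. Since `W a` is the vector of values of the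
Taylor polynomial of `f` at the nodes, `aᵉ - a = W⁻¹ r` where `r` is the vector of Taylor
remainders, each at most `M (Kh)^(N+1) / (N+1)!` by the Lagrange form of the remainder.
The entries of row `i` of `W⁻¹` are the `i`-th coefficients of the Lagrange basis polynomials
`Lⱼ = ∏_{k ≠ j} (X - x_k) / (x_j - x_k)`; by Vieta's formulas and the separation of the nodes
they are at most `C(N,i) (Kh)^(N-i) / h^N`. Summing the `N + 1` terms gives the bound.
-/

open Finset Polynomial
open scoped Matrix

theorem abs_coeff_prod_X_sub_C_le {ι : Type*} (s : Finset ι) (v : ι → ℝ) {B : ℝ}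
    (hv : ∀ k ∈ s, |v k| ≤ B) (i : ℕ) :
    |(∏ k ∈ s, (X - C (v k))).coeff i| ≤ (#s).choose i * B ^ (#s - i) := by
  rcases lt_or_ge #s i with hi | hi
  · rw [coeff_eq_zero_of_natDegree_lt (by simpa using hi), Nat.choose_eq_zero_of_lt hi]
    simp
  have hvieta := Multiset.prod_X_sub_C_coeff (s.val.map v) (k := i) (by simpa using hi)
  rw [Multiset.map_map, Multiset.card_map, Finset.esymm_map_val] at hvieta
  change (∏ k ∈ s, (X - C (v k))).coeff i = _ at hvieta
  have hterm : ∀ t ∈ s.powersetCard (#s - i), |∏ k ∈ t, v k| ≤ B ^ (#s - i) := by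
    intro t ht
    obtain ⟨hts, hcard⟩ := mem_powersetCard.mp ht
    rw [abs_prod, ← hcard, ← prod_const]
    exact prod_le_prod (fun _ _ => abs_nonneg _) fun k hk => hv k (hts hk)
  calc |(∏ k ∈ s, (X - C (v k))).coeff i|
      ≤ ∑ t ∈ s.powersetCard (#s - i), |∏ k ∈ t, v k| := by
        rw [hvieta, abs_mul, abs_pow, abs_neg, abs_one, one_pow, one_mul]
        exact abs_sum_le_sum_abs _ _
    _ ≤ (#s).choose i * B ^ (#s - i) := by
        grw [sum_le_sum hterm, sum_const, card_powersetCard, Nat.choose_symm hi, nsmul_eq_mul]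

theorem Lagrange.basis_eq_C_mul_prod {F ι : Type*} [Field F] [DecidableEq ι] (s : Finset ι)
    (v : ι → F) (i : ι) :
    Lagrange.basis s v i =
      C (∏ j ∈ s.erase i, (v i - v j)⁻¹) * ∏ j ∈ s.erase i, (X - C (v j)) := by
  simp only [Lagrange.basis, Lagrange.basisDivisor, prod_mul_distrib, map_prod]

theorem Lagrange.abs_coeff_basis_le {ι : Type*} [DecidableEq ι] {s : Finset ι} {v : ι → ℝ}
    {i : ι} (hi : i ∈ s) {h B : ℝ} (hh : 0 < h)
    (hsep : ∀ j ∈ s, j ≠ i → h ≤ |v i - v j|)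
    (hv : ∀ j ∈ s, |v j| ≤ B) (k : ℕ) :
    |(Lagrange.basis s v i).coeff k| ≤ (#s - 1).choose k * B ^ (#s - 1 - k) / h ^ (#s - 1) := by
  have hcard : #(s.erase i) = #s - 1 := card_erase_of_mem hi
  have hscale : |∏ j ∈ s.erase i, (v i - v j)⁻¹| ≤ (h ^ (#s - 1))⁻¹ := by
    rw [abs_prod, ← hcard, ← inv_pow, ← prod_const]
    refine prod_le_prod (fun _ _ => abs_nonneg _) fun j hj => ?_
    rw [abs_inv]
    exact inv_anti₀ hh (hsep j (mem_of_mem_erase hj) (ne_of_mem_erase hj))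
  rw [basis_eq_C_mul_prod, coeff_C_mul, abs_mul, div_eq_inv_mul]
  have hprod := abs_coeff_prod_X_sub_C_le (s.erase i) v (fun j hj => hv j (mem_of_mem_erase hj)) k
  rw [hcard] at hprod
  exact mul_le_mul hscale hprod (abs_nonneg _) (by positivity)

theorem Matrix.inv_vandermonde_apply_s4 {F : Type*} [Field F] {n : ℕ} {x : Fin n → F}
    (hx : Function.Injective x) (i j : Fin n) :
    (vandermonde x)⁻¹ i j = (Lagrange.basis univ x j).coeff i := by
  suffices vandermonde x * of (fun (i j : Fin n) => (Lagrange.basis univ x j).coeff i) = 1 by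
    rw [inv_eq_right_inv this, of_apply]
  ext k j
  have hdeg : (Lagrange.basis univ x j).natDegree < n := by
    rw [Lagrange.natDegree_basis hx.injOn (mem_univ j), card_univ, Fintype.card_fin]
    exact Nat.sub_one_lt_of_lt j.2
  have heval := eval_eq_sum_range' hdeg (x k)
  rw [← Fin.sum_univ_eq_sum_range (fun m => (Lagrange.basis univ x j).coeff m * x k ^ m)] at heval
  simp only [mul_apply, vandermonde_apply, of_apply, one_apply]
  rw [sum_congr rfl fun m _ => mul_comm _ _, ← heval]
  split_ifs with hkj
  · rw [hkj, Lagrange.eval_basis_self hx.injOn (mem_univ j)]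
  · exact Lagrange.eval_basis_of_ne (Ne.symm hkj) (mem_univ k)

theorem abs_sub_taylor_le {f : ℝ → ℝ} {n : ℕ} (hf : ContDiff ℝ (n + 1) f) {x₀ R M : ℝ}
    (hbound : ∀ ζ, |ζ - x₀| ≤ R → |iteratedDeriv (n + 1) f ζ| ≤ M) {x : ℝ}
    (hx : |x - x₀| ≤ R) :
    |f x - ∑ k ∈ range (n + 1), iteratedDeriv k f x₀ / k.factorial * (x - x₀) ^ k| ≤
      M * R ^ (n + 1) / (n + 1).factorial := by
  have hR : 0 ≤ R := (abs_nonneg _).trans hx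
  have hM : 0 ≤ M := (abs_nonneg _).trans (hbound x₀ (by simpa using hR))
  rcases eq_or_ne x₀ x with rfl | hne
  · simp [sum_range_succ']
    positivity
  have hu : UniqueDiffOn ℝ (Set.uIcc x₀ x) := uniqueDiffOn_uIcc hne
  obtain ⟨ξ, hξ, hrem⟩ := taylor_mean_remainder_lagrange_iteratedDeriv hne hf.contDiffOn
  have htaylor : taylorWithinEval f n (Set.uIcc x₀ x) x₀ x =
      ∑ k ∈ range (n + 1), iteratedDeriv k f x₀ / k.factorial * (x - x₀) ^ k := by
    rw [taylor_within_apply]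
    refine sum_congr rfl fun k hk => ?_
    have hfk : ContDiffAt ℝ k f x₀ :=
      hf.contDiffAt.of_le (by exact_mod_cast (mem_range.mp hk).le)
    rw [iteratedDerivWithin_eq_iteratedDeriv hu hfk Set.left_mem_uIcc, smul_eq_mul]
    ring
  have hξR : |ξ - x₀| ≤ R :=
    (Set.abs_sub_left_of_mem_uIcc (Set.uIoo_subset_uIcc_self hξ)).trans hx
  rw [← htaylor, hrem, abs_div, abs_mul, abs_pow, Nat.abs_cast]
  gcongr
  exact hbound ξ hξR

theorem Matrix.abs_mulVec_apply_le {m n : Type*} [Fintype n] (A : Matrix m n ℝ) (r : n → ℝ)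
    {i : m} {α β : ℝ} (hA : ∀ j, |A i j| ≤ α) (hr : ∀ j, |r j| ≤ β) :
    |(A *ᵥ r) i| ≤ Fintype.card n * (α * β) := by
  rw [Matrix.mulVec, dotProduct, ← card_univ, ← nsmul_eq_mul, ← sum_const]
  refine (abs_sum_le_sum_abs _ _).trans (sum_le_sum fun j _ => ?_)
  rw [abs_mul]
  exact mul_le_mul (hA j) (hr j) (abs_nonneg _) ((abs_nonneg _).trans (hA j))

theorem taylor_coefficient_estimate_error_general (N : ℕ) (f : ℝ → ℝ) (h K M : ℝ)
    (hh : 0 < h)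
    (hf : ContDiff ℝ (N + 1) f)
    (hbound : ∀ ζ : ℝ, |ζ| ≤ K * h → |iteratedDeriv (N + 1) f ζ| ≤ M)
    (x : Fin (N + 1) → ℝ)
    (hsep : ∀ i j, i ≠ j → h ≤ |x i - x j|)
    (hbd : ∀ i, |x i| ≤ K * h)
    (a ae : Fin (N + 1) → ℝ)
    (ha : ∀ n : Fin (N + 1), a n = iteratedDeriv (n : ℕ) f 0 / (n : ℕ).factorial)
    (hae : ae = (Matrix.vandermonde x)⁻¹.mulVec (fun j => f (x j))) :
    ∀ i : Fin (N + 1),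
      |ae i - a i| ≤
        M * (N.choose (i : ℕ)) * K ^ (2 * N + 1 - (i : ℕ)) * h ^ (N + 1 - (i : ℕ)) /
          N.factorial := by
  intro i
  have hinj : Function.Injective x := fun p q hpq =>
    by_contra fun hne => by simpa [hpq] using (hsep p q hne).trans_lt' hh
  set W := Matrix.vandermonde x
  set r : Fin (N + 1) → ℝ := fun j =>
    f (x j) - ∑ k ∈ range (N + 1), iteratedDeriv k f 0 / k.factorial * x j ^ k
  have herr : ae - a = W⁻¹ *ᵥ r := by
    have hr : r = (fun j => f (x j)) - W *ᵥ a := by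
      ext j
      simp only [r, W, Pi.sub_apply, Matrix.mulVec, dotProduct, Matrix.vandermonde_apply, ha,
        mul_comm (x j ^ _),
        Fin.sum_univ_eq_sum_range fun k => iteratedDeriv k f 0 / k.factorial * x j ^ k]
    have hWdet : IsUnit W.det := (Matrix.det_vandermonde_ne_zero_iff.mpr hinj).isUnit
    rw [hr, Matrix.mulVec_sub, Matrix.mulVec_mulVec, Matrix.nonsing_inv_mul _ hWdet,
      Matrix.one_mulVec, hae]
  have hWinv : ∀ j, |W⁻¹ i j| ≤ N.choose i * (K * h) ^ (N - i) / h ^ N := fun j => by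
    simpa [W, Matrix.inv_vandermonde_apply_s4 hinj] using
      Lagrange.abs_coeff_basis_le (mem_univ j) hh (fun k _ hkj => hsep j k hkj.symm)
        (fun k _ => hbd k) i
  have hr : ∀ j, |r j| ≤ M * (K * h) ^ (N + 1) / (N + 1).factorial := fun j => by
    simpa using abs_sub_taylor_le hf (x₀ := 0) (by simpa using hbound) (by simpa using hbd j)
  rw [← Pi.sub_apply, herr]
  refine (Matrix.abs_mulVec_apply_le _ r hWinv hr).trans_eq ?_
  have hiN : (i : ℕ) ≤ N := i.is_le
  generalize (i : ℕ) = k at hiN ⊢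
  obtain ⟨m, rfl⟩ : ∃ m, N = k + m := ⟨N - k, by omega⟩
  rw [Fintype.card_fin, Nat.factorial_succ, show k + m - k = m by omega,
    show 2 * (k + m) + 1 - k = k + 2 * m + 1 by omega, show k + m + 1 - k = m + 1 by omega]
  push_cast
  field_simp
  ring

theorem taylor_coefficient_estimate_error (N : ℕ) (f : ℝ → ℝ) (h K M : ℝ)
    (hh : 0 < h) (hK : 0 < K) (hM : 0 < M)
    (hf : ContDiff ℝ (N + 1) f)
    (hbound : ∀ ζ : ℝ, |ζ| ≤ K * h → |iteratedDeriv (N + 1) f ζ| ≤ M)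
    (x : Fin (N + 1) → ℝ)
    (hsep : ∀ i j, i ≠ j → h ≤ |x i - x j|)
    (hbd : ∀ i, |x i| ≤ K * h)
    (a ae : Fin (N + 1) → ℝ)
    (ha : ∀ n : Fin (N + 1), a n = iteratedDeriv (n : ℕ) f 0 / (n : ℕ).factorial)
    (hae : ae = (Matrix.vandermonde x)⁻¹.mulVec (fun j => f (x j))) :
    ∀ i : Fin (N + 1),
      |ae i - a i| ≤
        M * (N.choose (i : ℕ)) * K ^ (2 * N + 1 - (i : ℕ)) * h ^ (N + 1 - (i : ℕ)) /
          N.factorial :=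
  taylor_coefficient_estimate_error_general N f h K M hh hf hbound x hsep hbd a ae ha hae
end
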